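/- arXiv:quant-ph/0312044 — 7 statements merged into one kernel-verified Lean document; each statement's English description precedes it below -/
import Mathlib

section
/- Let ≤' be any partial order on Δ² such that ⊥ := (1/2,1/2) is its least element and the mixing law holds: whenever x ≤' y and p ∈ [0,1], then x ≤' (1−p)x + py and (1−p)x + py ≤' y. Then ≤' coincides with the Bayesian order on Δ², i.e. for all x, y ∈ Δ²: x ≤' y if and only if (y₁ ≤ x₁ ≤ 1/2 or 1/2 ≤ x₁ ≤ y₁). -/
/-- Δ² : classical two-states. -/
def ClState2 := {x : Fin 2 → ℝ // (∀ i, 0 ≤ x i) ∧ ∑ i, x i = 1}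

lemma CS_snd (x : ClState2) : x.val 1 = 1 - x.val 0 := by
  have h := x.2.2
  rw [Fin.sum_univ_two] at h
  linarith

noncomputable def mixS (x y : ClState2) (p : ℝ) (h0 : 0 ≤ p) (h1 : p ≤ 1) : ClState2 :=
  ⟨(1 - p) • x.val + p • y.val, by
    constructor
    · intro i
      have hx := x.2.1 i; have hy := y.2.1 i
      simp only [Pi.add_apply, Pi.smul_apply, smul_eq_mul]
      nlinarith
    · have hx := x.2.2; have hy := y.2.2
      rw [Fin.sum_univ_two] at hx hy ⊢
      simp only [Pi.add_apply, Pi.smul_apply, smul_eq_mul]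
      nlinarith⟩

lemma mixS_fst (x y : ClState2) (p : ℝ) (h0 : 0 ≤ p) (h1 : p ≤ 1) :
    (mixS x y p h0 h1).val 0 = (1 - p) * x.val 0 + p * y.val 0 := by
  simp [mixS]

noncomputable def botS : ClState2 := ⟨fun _ => 1/2, by
  constructor
  · intro i; norm_num
  · rw [Fin.sum_univ_two]; norm_num⟩

set_option maxHeartbeats 1600000 in
/-- Any partial order on Δ² with least element ⊥ = (1/2,1/2) satisfying the mixing law
coincides with the Bayesian order on two-states. -/
theorem bayesian_order_unique_on_two_states
    (le : ClState2 → ClState2 → Prop)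
    (hrefl : ∀ x, le x x)
    (hantisymm : ∀ x y, le x y → le y x → x = y)
    (htrans : ∀ x y z, le x y → le y z → le x z)
    (hbot : ∀ b : ClState2, (∀ i, b.val i = 1 / 2) → ∀ x, le b x)
    (hmix : ∀ x y : ClState2, le x y → ∀ p : ℝ, 0 ≤ p → p ≤ 1 →
      ∀ z : ClState2, z.val = (1 - p) • x.val + p • y.val → le x z ∧ le z y) :
    ∀ x y : ClState2,
      le x y ↔ ((y.val 0 ≤ x.val 0 ∧ x.val 0 ≤ 1 / 2) ∨
                (1 / 2 ≤ x.val 0 ∧ x.val 0 ≤ y.val 0)) := by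
  intro x y
  have hxs := CS_snd x
  have hys := CS_snd y
  have hx0 := x.2.1 0
  have hx1 := x.2.1 1
  have hy0 := y.2.1 0
  have hy1 := y.2.1 1
  have hbotv : ∀ i : Fin 2, botS.val i = 1 / 2 := by intro i; simp [botS]
  constructor
  · intro hxy
    by_contra hcon
    push_neg at hcon
    obtain ⟨h1, h2⟩ := hcon
    rcases lt_trichotomy (x.val 0) (1/2) with hlt | heq | hgt
    · -- x₀ < 1/2; then x₀ < y₀
      have hxy0 : x.val 0 < y.val 0 := by
        by_contra h
        push_neg at h
        exact absurd (h1 h) (not_lt.mpr hlt.le)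
      rcases le_or_gt (1/2) (y.val 0) with hy2 | hy2
      · -- cross the middle: z = ⊥ on segment [x,y]
        set p : ℝ := (1/2 - x.val 0) / (y.val 0 - x.val 0) with hp
        have hd : 0 < y.val 0 - x.val 0 := by linarith
        have hp0 : 0 ≤ p := div_nonneg (by linarith) hd.le
        have hp1 : p ≤ 1 := by
          rw [div_le_one hd]; linarith
        have hkey : p * (y.val 0 - x.val 0) = 1/2 - x.val 0 :=
          div_mul_cancel₀ _ (ne_of_gt hd)
        set z := mixS x y p hp0 hp1 with hz
        have hz0 : z.val 0 = 1/2 := by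
          rw [hz, mixS_fst]; nlinarith [hkey]
        have hzb : ∀ i : Fin 2, z.val i = 1/2 := by
          intro i
          fin_cases i
          · exact hz0
          · show z.val 1 = 1/2
            rw [CS_snd z, hz0]; norm_num
        have hxz := (hmix x y hxy p hp0 hp1 z rfl).1
        have hzx := hbot z hzb x
        have : x = z := hantisymm x z hxz hzx
        have : x.val 0 = 1/2 := by rw [this]; exact hz0
        linarith
      · -- x₀ < y₀ < 1/2 : y is mix of ⊥ and x, so le y x
        have hd : x.val 0 - 1/2 < 0 := by linarith
        set q : ℝ := (y.val 0 - 1/2) / (x.val 0 - 1/2) with hq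
        have hq0 : 0 ≤ q :=
          div_nonneg_iff.mpr (Or.inr ⟨by linarith, by linarith⟩)
        have hq1 : q ≤ 1 := by
          rw [div_le_one_iff]; exact Or.inr (Or.inr ⟨by linarith, by linarith⟩)
        have hkey : q * (x.val 0 - 1/2) = y.val 0 - 1/2 :=
          div_mul_cancel₀ _ (ne_of_lt hd)
        have hyval : y.val = (1 - q) • botS.val + q • x.val := by
          funext i
          fin_cases i
          · show y.val 0 = (1 - q) * botS.val 0 + q * x.val 0
            rw [hbotv 0]; nlinarith [hkey]
          · show y.val 1 = (1 - q) * botS.val 1 + q * x.val 1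
            rw [hbotv 1, hxs, hys]; nlinarith [hkey]
        have hyx := (hmix botS x (hbot botS hbotv x) q hq0 hq1 y hyval).2
        have hEq : x = y := hantisymm x y hxy hyx
        have : x.val 0 = y.val 0 := by rw [hEq]
        linarith
    · -- x₀ = 1/2 : contradiction with h1/h2
      have := h2 (le_of_eq heq.symm)
      have := h1 (by linarith)
      linarith
    · -- x₀ > 1/2; then y₀ < x₀
      have hxy0 : y.val 0 < x.val 0 := h2 (by linarith)
      rcases le_or_gt (y.val 0) (1/2) with hy2 | hy2
      · set p : ℝ := (x.val 0 - 1/2) / (x.val 0 - y.val 0) with hp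
        have hd : 0 < x.val 0 - y.val 0 := by linarith
        have hp0 : 0 ≤ p := div_nonneg (by linarith) hd.le
        have hp1 : p ≤ 1 := by
          rw [div_le_one hd]; linarith
        have hkey : p * (x.val 0 - y.val 0) = x.val 0 - 1/2 :=
          div_mul_cancel₀ _ (ne_of_gt hd)
        set z := mixS x y p hp0 hp1 with hz
        have hz0 : z.val 0 = 1/2 := by
          rw [hz, mixS_fst]; nlinarith [hkey]
        have hzb : ∀ i : Fin 2, z.val i = 1/2 := by
          intro i
          fin_cases i
          · exact hz0
          · show z.val 1 = 1/2
            rw [CS_snd z, hz0]; norm_num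
        have hxz := (hmix x y hxy p hp0 hp1 z rfl).1
        have hzx := hbot z hzb x
        have : x = z := hantisymm x z hxz hzx
        have : x.val 0 = 1/2 := by rw [this]; exact hz0
        linarith
      · have hd : 0 < x.val 0 - 1/2 := by linarith
        set q : ℝ := (y.val 0 - 1/2) / (x.val 0 - 1/2) with hq
        have hq0 : 0 ≤ q := by
          apply div_nonneg <;> linarith
        have hq1 : q ≤ 1 := by
          rw [div_le_one hd]; linarith
        have hkey : q * (x.val 0 - 1/2) = y.val 0 - 1/2 :=
          div_mul_cancel₀ _ (ne_of_gt hd)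
        have hyval : y.val = (1 - q) • botS.val + q • x.val := by
          funext i
          fin_cases i
          · show y.val 0 = (1 - q) * botS.val 0 + q * x.val 0
            rw [hbotv 0]; nlinarith [hkey]
          · show y.val 1 = (1 - q) * botS.val 1 + q * x.val 1
            rw [hbotv 1, hxs, hys]; nlinarith [hkey]
        have hyx := (hmix botS x (hbot botS hbotv x) q hq0 hq1 y hyval).2
        have hEq : x = y := hantisymm x y hxy hyx
        have : x.val 0 = y.val 0 := by rw [hEq]
        linarith
  · intro h
    rcases eq_or_ne (y.val 0) (1/2) with hy2 | hy2
    · -- then x₀ = 1/2, so x = ⊥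
      have hx2 : x.val 0 = 1/2 := by
        rcases h with ⟨ha, hb⟩ | ⟨ha, hb⟩ <;> linarith
      have hxb : ∀ i : Fin 2, x.val i = 1/2 := by
        intro i
        fin_cases i
        · exact hx2
        · show x.val 1 = 1/2
          rw [hxs, hx2]; norm_num
      exact hbot x hxb y
    · have hd : y.val 0 - 1/2 ≠ 0 := by
        intro hc; exact hy2 (by linarith)
      set q : ℝ := (x.val 0 - 1/2) / (y.val 0 - 1/2) with hq
      have hq0 : 0 ≤ q := by
        rcases h with ⟨ha, hb⟩ | ⟨ha, hb⟩
        · have hylt : y.val 0 < 1/2 :=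
            lt_of_le_of_ne (by linarith) hy2
          exact div_nonneg_iff.mpr (Or.inr ⟨by linarith, by linarith⟩)
        · exact div_nonneg (by linarith) (by linarith)
      have hq1 : q ≤ 1 := by
        rcases h with ⟨ha, hb⟩ | ⟨ha, hb⟩
        · have hylt : y.val 0 < 1/2 :=
            lt_of_le_of_ne (by linarith) hy2
          rw [div_le_one_iff]
          exact Or.inr (Or.inr ⟨by linarith, by linarith⟩)
        · have hygt : 1/2 < y.val 0 :=
            lt_of_le_of_ne (by linarith) (Ne.symm hy2)
          rw [div_le_one_iff]
          exact Or.inl ⟨by linarith, by linarith⟩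
      have hkey : q * (y.val 0 - 1/2) = x.val 0 - 1/2 :=
        div_mul_cancel₀ _ hd
      have hxval : x.val = (1 - q) • botS.val + q • y.val := by
        funext i
        fin_cases i
        · show x.val 0 = (1 - q) * botS.val 0 + q * y.val 0
          rw [hbotv 0]; nlinarith [hkey]
        · show x.val 1 = (1 - q) * botS.val 1 + q * y.val 1
          rw [hbotv 1, hxs, hys]; nlinarith [hkey]
      exact (hmix botS y (hbot botS hbotv y) q hq0 hq1 x hxval).2
end

section
/- Let n ≥ 2 and for x ∈ Δ^{n+1} with x ≠ eᵢ let pᵢ(x) := (1/(1−xᵢ))·(x₁,…,x̂ᵢ,…,x_{n+1}) ∈ Δⁿ (delete the i-th coordinate and renormalize). Define the Bayesian order recursively: on Δ², x ⊑ y iff (y₁ ≤ x₁ ≤ 1/2 or 1/2 ≤ x₁ ≤ y₁); on Δ^{n+1}, x ⊑ y iff for all i, whenever x ≠ eᵢ and y ≠ eᵢ one has pᵢ(x) ⊑ pᵢ(y). Then for all x, y ∈ Δⁿ (n ≥ 2): x ⊑ y if and only if there is a permutation σ of {1,…,n} such that x∘σ and y∘σ are both decreasing and (x∘σ)ᵢ·(y∘σ)ᵢ₊₁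 ≤ (x∘σ)ᵢ₊₁·(y∘σ)ᵢ for all 1 ≤ i < n. -/
/-- Δⁿ : classical n-states. -/
def IsClassicalState (n : ℕ) (x : Fin n → ℝ) : Prop :=
  (∀ i, 0 ≤ x i) ∧ ∑ i, x i = 1

/-- The pure state eᵢ. -/
def pureState {n : ℕ} (i : Fin n) : Fin n → ℝ := fun j => if j = i then 1 else 0

/-- The Bayesian projection pᵢ : delete the i-th coordinate and renormalize. -/
noncomputable def bayesProj {n : ℕ} (i : Fin (n + 1)) (x : Fin (n + 1) → ℝ) :
    Fin n → ℝ := fun j => x (i.succAbove j) / (1 - x i)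

/-- The Bayesian order, defined recursively: on Δ² explicitly, and on Δ^{n+1} via the
Bayesian projections. -/
noncomputable def bayesRec : (n : ℕ) → (Fin n → ℝ) → (Fin n → ℝ) → Prop
  | 0, _, _ => True
  | 1, _, _ => True
  | 2, x, y => (y 0 ≤ x 0 ∧ x 0 ≤ 1 / 2) ∨ (1 / 2 ≤ x 0 ∧ x 0 ≤ y 0)
  | n + 3, x, y =>
      ∀ i : Fin (n + 3), x ≠ pureState i → y ≠ pureState i →
        bayesRec (n + 2) (bayesProj i x) (bayesProj i y)

/-- The symmetric characterization of the Bayesian order. -/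
def bayesSym {n : ℕ} (x y : Fin n → ℝ) : Prop :=
  ∃ σ : Equiv.Perm (Fin n),
    Antitone (fun i => x (σ i)) ∧ Antitone (fun i => y (σ i)) ∧
    ∀ i j : Fin n, (i : ℕ) + 1 = (j : ℕ) →
      x (σ i) * y (σ j) ≤ x (σ j) * y (σ i)

/-!
Both orders are equivalent to a pairwise condition: whenever `x b < x a`, also `y b ≤ y a` and
`x a * y b ≤ x b * y a`. For `bayesSym`, a lexicographic sort by `(x, y)` produces the
permutation, and conversely the adjacent cross inequalities chain along the sorted order.
For `bayesRec`, the pairwise condition is invariant under the renormalisation in `bayesProj`,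
and in dimension at least three every pair of coordinates survives the deletion of some third
one; the base case `Δ²` is a direct computation.
-/

theorem IsClassicalState.apply_lt_one {n : ℕ} {x : Fin n → ℝ} (hx : IsClassicalState n x)
    {i : Fin n} (hxi : x ≠ pureState i) : x i < 1 := by
  obtain ⟨hx0, hsum⟩ := hx
  have hle : x i ≤ 1 := hsum ▸ Finset.single_le_sum (fun j _ => hx0 j) (Finset.mem_univ i)
  refine hle.lt_of_ne fun hxi1 => hxi ?_
  have hrest : ∑ j ∈ Finset.univ.erase i, x j = 0 := by
    linarith [Finset.add_sum_erase Finset.univ x (Finset.mem_univ i)]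
  funext j
  by_cases hji : j = i
  · simp [pureState, hji, hxi1]
  · simpa [pureState, hji] using
      (Finset.sum_eq_zero_iff_of_nonneg fun k _ => hx0 k).1 hrest j (by simp [hji])

theorem IsClassicalState.bayesProj {n : ℕ} {x : Fin (n + 1) → ℝ}
    (hx : IsClassicalState (n + 1) x) {i : Fin (n + 1)} (hxi : x ≠ pureState i) :
    IsClassicalState n (bayesProj i x) := by
  have hpos : 0 < 1 - x i := sub_pos.2 (hx.apply_lt_one hxi)
  refine ⟨fun j => div_nonneg (hx.1 _) hpos.le, ?_⟩
  have hrest : ∑ j, x (i.succAbove j) = 1 - x i := by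
    linarith [Fin.sum_univ_succAbove x i, hx.2]
  simp only [_root_.bayesProj, ← Finset.sum_div, hrest, div_self hpos.ne']

/-- Permutation-free form of `bayesSym`. -/
def BayesPairwise {ι : Type*} (x y : ι → ℝ) : Prop :=
  ∀ a b, x b < x a → y b ≤ y a ∧ x a * y b ≤ x b * y a

section BayesPairwise

variable {ι κ : Type*} {x y : ι → ℝ}

theorem BayesPairwise.comp (h : BayesPairwise x y) (f : κ → ι) :
    BayesPairwise (x ∘ f) (y ∘ f) :=
  fun a b => h (f a) (f b)

theorem bayesPairwise_div_iff {s t : ℝ} (hs : 0 < s) (ht : 0 < t) :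
    BayesPairwise (fun i => x i / s) (fun i => y i / t) ↔ BayesPairwise x y := by
  simp only [BayesPairwise, div_lt_div_iff_of_pos_right hs, div_le_div_iff_of_pos_right ht,
    div_mul_div_comm, div_le_div_iff_of_pos_right (mul_pos hs ht)]

end BayesPairwise

theorem bayesPairwise_iff_forall_succAbove {n : ℕ} {x y : Fin (n + 3) → ℝ} :
    BayesPairwise x y ↔ ∀ c : Fin (n + 3), x ≠ pureState c → y ≠ pureState c →
      BayesPairwise (x ∘ c.succAbove) (y ∘ c.succAbove) := by
  refine ⟨fun h c _ _ => h.comp c.succAbove, fun h a b hab => ?_⟩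
  obtain ⟨c, hca, hcb⟩ := Fin.exists_ne_and_ne_of_two_lt a b (by omega)
  have hxc : x ≠ pureState c := by
    rintro rfl
    simp [pureState, hca.symm, hcb.symm] at hab
  by_cases hyc : y = pureState c
  · simp [hyc, pureState, hca.symm, hcb.symm]
  obtain ⟨a', rfl⟩ := Fin.exists_succAbove_eq hca.symm
  obtain ⟨b', rfl⟩ := Fin.exists_succAbove_eq hcb.symm
  exact h c hxc hyc a' b' hab

theorem bayesRec_two_iff {x y : Fin 2 → ℝ} (hx : IsClassicalState 2 x)
    (hy : IsClassicalState 2 y) : bayesRec 2 x y ↔ BayesPairwise x y := by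
  have hx1 : x 1 = 1 - x 0 := by linarith [hx.2, Fin.sum_univ_two x]
  have hy1 : y 1 = 1 - y 0 := by linarith [hy.2, Fin.sum_univ_two y]
  simp only [bayesRec, BayesPairwise, Fin.forall_fin_two, lt_irrefl, IsEmpty.forall_iff,
    true_and, and_true, hx1, hy1]
  constructor
  · rintro (⟨h1, h2⟩ | ⟨h1, h2⟩) <;> constructor <;> intro h <;> constructor <;> nlinarith
  · rintro ⟨h01, h10⟩
    rcases lt_trichotomy (x 0) (1 / 2) with hlt | heq | hgt
    · exact Or.inl ⟨by nlinarith [h10 (by linarith)], hlt.le⟩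
    · rcases le_total (y 0) (x 0) with hyx | hxy
      · exact Or.inl ⟨hyx, heq.le⟩
      · exact Or.inr ⟨heq.ge, hxy⟩
    · exact Or.inr ⟨hgt.le, by nlinarith [h01 (by linarith)]⟩

theorem bayesRec_iff_bayesPairwise {n : ℕ} (hn : 2 ≤ n) {x y : Fin n → ℝ}
    (hx : IsClassicalState n x) (hy : IsClassicalState n y) :
    bayesRec n x y ↔ BayesPairwise x y := by
  induction n, hn using Nat.le_induction with
  | base => exact bayesRec_two_iff hx hy
  | succ n hn ih =>
    obtain ⟨k, rfl⟩ := Nat.exists_eq_add_of_le' hn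
    rw [bayesRec, bayesPairwise_iff_forall_succAbove]
    refine forall_congr' fun c => imp_congr_right fun hxc => imp_congr_right fun hyc => ?_
    rw [ih (hx.bayesProj hxc) (hy.bayesProj hyc)]
    exact bayesPairwise_div_iff (sub_pos.2 (hx.apply_lt_one hxc))
      (sub_pos.2 (hy.apply_lt_one hyc))

theorem cross_mul_le_trans {a a' b b' c c' : ℝ} (hc : 0 ≤ c) (hc' : 0 ≤ c') (ha' : 0 ≤ a')
    (hcb' : c' ≤ b') (hab : a * b' ≤ b * a') (hbc : b * c' ≤ c * b') : a * c' ≤ c * a' := by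
  rcases (hc'.trans hcb').lt_or_eq with hb' | hb'
  · refine le_of_mul_le_mul_right ?_ hb'
    calc a * c' * b' = a * b' * c' := by ring
      _ ≤ b * a' * c' := mul_le_mul_of_nonneg_right hab hc'
      _ = b * c' * a' := by ring
      _ ≤ c * b' * a' := mul_le_mul_of_nonneg_right hbc ha'
      _ = c * a' * b' := by ring
  · obtain rfl : c' = 0 := le_antisymm (hb' ▸ hcb') hc'
    simpa using mul_nonneg hc ha'

theorem cross_mul_le_of_le {n : ℕ} {u v : Fin n → ℝ} (hv : Antitone v) (hu0 : ∀ i, 0 ≤ u i)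
    (hv0 : ∀ i, 0 ≤ v i) (hadj : ∀ i j : Fin n, (i : ℕ) + 1 = j → u i * v j ≤ u j * v i)
    {i j : Fin n} (hij : i ≤ j) : u i * v j ≤ u j * v i := by
  obtain ⟨k, hk⟩ := Nat.exists_eq_add_of_le (Fin.le_def.1 hij)
  induction k generalizing j with
  | zero => rw [Fin.ext hk]
  | succ k ih =>
    let j' : Fin n := ⟨i + k, by omega⟩
    exact cross_mul_le_trans (hu0 j) (hv0 j) (hv0 i) (hv (Fin.le_def.2 (by simp [j']; omega)))
      (ih (Fin.le_def.2 (by simp [j'])) rfl) (hadj j' j (by simp [j']; omega))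

theorem BayesPairwise.of_bayesSym {n : ℕ} {x y : Fin n → ℝ} (hx0 : ∀ i, 0 ≤ x i)
    (hy0 : ∀ i, 0 ≤ y i) (h : bayesSym x y) : BayesPairwise x y := by
  obtain ⟨σ, hxσ, hyσ, hadj⟩ := h
  intro a b hab
  obtain ⟨i, rfl⟩ := σ.surjective a
  obtain ⟨j, rfl⟩ := σ.surjective b
  have hij : i ≤ j := le_of_not_ge fun hji => (hxσ hji).not_gt hab
  exact ⟨hyσ hij, cross_mul_le_of_le (u := fun i => x (σ i)) hyσ (fun _ => hx0 _)
    (fun _ => hy0 _) hadj hij⟩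

theorem exists_perm_antitone {α : Type*} [LinearOrder α] {n : ℕ} (f : Fin n → α) :
    ∃ σ : Equiv.Perm (Fin n), Antitone (f ∘ σ) :=
  ⟨Tuple.sort (OrderDual.toDual ∘ f),
    monotone_toDual_comp_iff.1 (Tuple.monotone_sort (OrderDual.toDual ∘ f))⟩

theorem bayesSym_of_bayesPairwise {n : ℕ} {x y : Fin n → ℝ} (hx0 : ∀ i, 0 ≤ x i)
    (h : BayesPairwise x y) : bayesSym x y := by
  obtain ⟨σ, hσ⟩ := exists_perm_antitone fun i => toLex (x i, y i)
  have hlex : ∀ {i j}, i ≤ j →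
      x (σ j) < x (σ i) ∨ x (σ j) = x (σ i) ∧ y (σ j) ≤ y (σ i) :=
    fun hij => Prod.Lex.toLex_le_toLex.1 (hσ hij)
  have hxσ : Antitone fun i => x (σ i) := fun _ _ hij =>
    (hlex hij).elim le_of_lt fun hxy => hxy.1.le
  have hyσ : Antitone fun i => y (σ i) := fun _ _ hij =>
    (hlex hij).elim (fun hlt => (h _ _ hlt).1) And.right
  refine ⟨σ, hxσ, hyσ, fun i j hij => ?_⟩
  rcases hlex (Fin.le_def.2 (by omega) : i ≤ j) with hlt | ⟨heq, hle⟩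
  · exact (h _ _ hlt).2
  · rw [heq]
    exact mul_le_mul_of_nonneg_left hle (hx0 _)

theorem bayesSym_iff_bayesPairwise {n : ℕ} {x y : Fin n → ℝ} (hx0 : ∀ i, 0 ≤ x i)
    (hy0 : ∀ i, 0 ≤ y i) : bayesSym x y ↔ BayesPairwise x y :=
  ⟨.of_bayesSym hx0 hy0, bayesSym_of_bayesPairwise hx0⟩

/-- The recursive Bayesian order coincides with its symmetric characterization. -/
theorem bayesian_order_symmetric_characterization
    (n : ℕ) (hn : 2 ≤ n) (x y : Fin n → ℝ)
    (hx : IsClassicalState n x) (hy : IsClassicalState n y) :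
    bayesRec n x y ↔ bayesSym x y :=
  (bayesRec_iff_bayesPairwise hn hx hy).trans (bayesSym_iff_bayesPairwise hx.1 hy.1).symm
end

section
/- For every n ≥ 2, the Bayesian order ⊑ on Δⁿ is a partial order in which every directed subset has a supremum (a dcpo); its set of maximal elements is exactly {e₁,…,eₙ}, and its least element is ⊥ = (1/n,…,1/n). -/
def ClState (n : ℕ) := {x : Fin n → ℝ // IsClassicalState n x}

/-- The Bayesian order (symmetric characterization). -/
def bayesLE {n : ℕ} (x y : Fin n → ℝ) : Prop :=
  ∃ σ : Equiv.Perm (Fin n),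
    Antitone (fun i => x (σ i)) ∧ Antitone (fun i => y (σ i)) ∧
    ∀ i j : Fin n, (i : ℕ) + 1 = (j : ℕ) →
      x (σ i) * y (σ j) ≤ x (σ j) * y (σ i)

def clLE {n : ℕ} (x y : ClState n) : Prop := bayesLE x.val y.val

/-- `a` is the supremum (least upper bound) of `S` with respect to `le`. -/
def IsLub' {α : Type*} (le : α → α → Prop) (S : Set α) (a : α) : Prop :=
  (∀ s ∈ S, le s a) ∧ ∀ b, (∀ s ∈ S, le s b) → le a b

theorem exists_isLUB_of_directedOn {α : Type*} [Preorder α] [TopologicalSpace α] [CompactSpace α]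
    [ClosedIciTopology α] [ClosedIicTopology α] {S : Set α} (hne : S.Nonempty)
    (hd : DirectedOn (· ≤ ·) S) : ∃ a, IsLUB S a := by
  have : Nonempty S := hne.to_subtype
  let C : S → Set α := fun s => Set.Ici s.1 ∩ ⋂ b ∈ upperBounds S, Set.Iic b
  have hclosed : ∀ s, IsClosed (C s) := fun s =>
    isClosed_Ici.inter (isClosed_biInter fun b _ => isClosed_Iic)
  have hdir : Directed (· ⊇ ·) C := by
    rintro ⟨s, hs⟩ ⟨s', hs'⟩
    obtain ⟨t, ht, hst, hs't⟩ := hd s hs s' hs'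
    exact ⟨⟨t, ht⟩, Set.inter_subset_inter_left _ (Set.Ici_subset_Ici.mpr hst),
      Set.inter_subset_inter_left _ (Set.Ici_subset_Ici.mpr hs't)⟩
  have hmem (s : S) : s.1 ∈ C s := ⟨le_rfl, Set.mem_iInter₂.mpr fun _ hb => hb s.2⟩
  obtain ⟨a, ha⟩ := IsCompact.nonempty_iInter_of_directed_nonempty_isCompact_isClosed C hdir
    (fun s => ⟨s, hmem s⟩) (fun s => (hclosed s).isCompact) hclosed
  rw [Set.mem_iInter] at ha
  exact ⟨a, fun s hs => (ha ⟨s, hs⟩).1,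
    fun b hb => Set.mem_iInter₂.mp (ha (Classical.arbitrary S)).2 b hb⟩

/-- Rows `(a, b), (c, d), (e, f)` whose consecutive `2 × 2` minors are nonnegative have a
nonnegative outer minor; the two implications replace division by the middle row. -/
theorem cross_mul_le_trans_s2 {a b c d e f : ℝ} (hb : 0 ≤ b) (hc : 0 ≤ c) (hd : 0 ≤ d) (he : 0 ≤ e)
    (hf : 0 ≤ f) (hce : c = 0 → e = 0) (hdf : d = 0 → f = 0)
    (h₁ : a * d ≤ b * c) (h₂ : c * f ≤ d * e) : a * f ≤ b * e := by
  rcases hd.eq_or_lt with rfl | hd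
  · simp [hdf rfl, mul_nonneg hb he]
  rcases hc.eq_or_lt with rfl | hc
  · have ha : a ≤ 0 := nonpos_of_mul_nonpos_left (by simpa using h₁) hd
    simpa [hce rfl] using mul_nonpos_of_nonpos_of_nonneg ha hf
  refine le_of_mul_le_mul_right ?_ (mul_pos hc hd)
  calc a * f * (c * d) = a * d * (c * f) := by ring
    _ ≤ b * c * (d * e) := mul_le_mul h₁ h₂ (mul_nonneg hc.le hf) (mul_nonneg hb hc.le)
    _ = b * e * (c * d) := by ring

section Pairwise

variable {ι : Type*} {x y z : ι → ℝ} {a b : ι}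

/-- On the coordinates `a, b`, both `x` and `y` rank `a` above `b`, and `y` favours `a` relatively
more than `x` does. -/
def PairBayesLE (x y : ι → ℝ) (a b : ι) : Prop :=
  x b ≤ x a ∧ y b ≤ y a ∧ x a * y b ≤ x b * y a

def PairwiseBayesLE (x y : ι → ℝ) : Prop :=
  ∀ a b, PairBayesLE x y a b ∨ PairBayesLE x y b a

theorem PairwiseBayesLE.refl (x : ι → ℝ) : PairwiseBayesLE x x := by
  intro a b
  rcases le_total (x b) (x a) with h | h
  · exact Or.inl ⟨h, h, (mul_comm _ _).le⟩
  · exact Or.inr ⟨h, h, (mul_comm _ _).le⟩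

theorem PairwiseBayesLE.pairBayesLE_of_add_le (h : PairwiseBayesLE x y)
    (hab : x b + y b ≤ x a + y a) : PairBayesLE x y a b := by
  rcases h a b with h | ⟨hx, hy, -⟩
  · exact h
  · obtain ⟨hxa, hya⟩ : x a = x b ∧ y a = y b := ⟨by linarith, by linarith⟩
    exact ⟨hxa.ge, hya.ge, by rw [hxa, hya]⟩

theorem pairwiseBayesLE_const {c : ℝ} (hc : 0 ≤ c) (y : ι → ℝ) :
    PairwiseBayesLE (fun _ => c) y := by
  intro a b
  rcases le_total (y b) (y a) with h | h
  · exact Or.inl ⟨le_rfl, h, mul_le_mul_of_nonneg_left h hc⟩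
  · exact Or.inr ⟨le_rfl, h, mul_le_mul_of_nonneg_left h hc⟩

theorem PairwiseBayesLE.eq_zero_of_eq_zero (h : PairwiseBayesLE y z) (hy : ∃ a, 0 < y a)
    (hz : ∀ i, 0 ≤ z i) (hb : y b = 0) : z b = 0 := by
  obtain ⟨a, ha⟩ := hy
  rcases h a b with ⟨-, -, h⟩ | ⟨h, -, -⟩
  · rw [hb, zero_mul] at h
    exact le_antisymm (nonpos_of_mul_nonpos_right h ha) (hz b)
  · linarith

theorem PairwiseBayesLE.trans (hx : ∀ i, 0 ≤ x i) (hy : ∀ i, 0 ≤ y i) (hy₀ : ∃ a, 0 < y a)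
    (hz : ∀ i, 0 ≤ z i) (hxy : PairwiseBayesLE x y) (hyz : PairwiseBayesLE y z) :
    PairwiseBayesLE x z := by
  have hzero (i : ι) : y i = 0 → z i = 0 := hyz.eq_zero_of_eq_zero hy₀ hz
  have same (a b : ι) (h₁ : PairBayesLE x y a b) (h₂ : PairBayesLE y z a b) :
      PairBayesLE x z a b :=
    ⟨h₁.1, h₂.2.1, cross_mul_le_trans_s2 (hx b) (hy a) (hy b) (hz a) (hz b) (hzero a) (hzero b)
      h₁.2.2 h₂.2.2⟩
  have opposite (a b : ι) (h₁ : PairBayesLE x y a b) (h₂ : PairBayesLE y z b a) :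
      PairBayesLE x z a b ∨ PairBayesLE x z b a := by
    obtain ⟨hxab, hyab, hxy⟩ := h₁
    obtain ⟨hyba, hzba, -⟩ := h₂
    have hyeq : y a = y b := le_antisymm hyba hyab
    rcases (hy a).eq_or_lt with hya | hya
    · have hza := hzero a hya.symm
      have hzb := hzero b (hyeq ▸ hya.symm)
      exact Or.inl ⟨hxab, by rw [hza, hzb], by simp [hza, hzb]⟩
    · rw [hyeq] at hxy hya
      have hxeq : x a = x b := le_antisymm (le_of_mul_le_mul_right hxy hya) hxab
      exact Or.inr ⟨hxeq.le, hzba, by rw [hxeq]; exact mul_le_mul_of_nonneg_left hzba (hx b)⟩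
  intro a b
  rcases hxy a b with h₁ | h₁ <;> rcases hyz a b with h₂ | h₂
  · exact Or.inl (same a b h₁ h₂)
  · exact opposite a b h₁ h₂
  · exact (opposite b a h₁ h₂).symm
  · exact Or.inr (same b a h₁ h₂)

theorem PairwiseBayesLE.antisymm [Fintype ι] (hx : ∑ i, x i = 1) (hy : ∑ i, y i = 1)
    (hxy : PairwiseBayesLE x y) (hyx : PairwiseBayesLE y x) : x = y := by
  have cross (a b : ι) : x a * y b = x b * y a := by
    rcases hxy a b with h₁ | h₁ <;> rcases hyx a b with h₂ | h₂
    · linarith [h₁.2.2, h₂.2.2]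
    · rw [le_antisymm h₂.2.1 h₁.1, le_antisymm h₂.1 h₁.2.1]
    · rw [le_antisymm h₁.1 h₂.2.1, le_antisymm h₁.2.1 h₂.1]
    · linarith [h₁.2.2, h₂.2.2]
  funext a
  calc x a = ∑ i, x a * y i := by rw [← Finset.mul_sum, hy, mul_one]
    _ = ∑ i, x i * y a := Finset.sum_congr rfl fun i _ => cross a i
    _ = y a := by rw [← Finset.sum_mul, hx, one_mul]

end Pairwise

section BayesLE

variable {n : ℕ} {x y : Fin n → ℝ}

/-- Sorting the coordinates by `x + y` orders both `x` and `y`: on a tie of `x + y`, the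
pairwise condition forces `x` and `y` to tie as well. -/
theorem bayesLE_of_pairwiseBayesLE (h : PairwiseBayesLE x y) : bayesLE x y := by
  set σ := Tuple.sort fun a => -(x a + y a)
  have hσ : ∀ ⦃i j : Fin n⦄, i ≤ j → PairBayesLE x y (σ i) (σ j) := fun i j hij =>
    h.pairBayesLE_of_add_le (neg_le_neg_iff.mp (Tuple.monotone_sort (fun a => -(x a + y a)) hij))
  exact ⟨σ, fun i j hij => (hσ hij).1, fun i j hij => (hσ hij).2.1,
    fun i j hij => (hσ (Fin.le_iff_val_le_val.mpr (by omega))).2.2⟩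

theorem pairwiseBayesLE_of_bayesLE (hx : ∀ i, 0 ≤ x i) (hy : ∀ i, 0 ≤ y i)
    (h : bayesLE x y) : PairwiseBayesLE x y := by
  obtain ⟨σ, hxσ, hyσ, hstep⟩ := h
  have hratio : ∀ ⦃i j : Fin n⦄, Relation.ReflTransGen (· ⋖ ·) i j →
      x (σ i) * y (σ j) ≤ x (σ j) * y (σ i) := by
    intro i j h
    induction h with
    | refl => rw [mul_comm]
    | @tail k j _ hkj ih =>
      have hkj' : x (σ k) * y (σ j) ≤ x (σ j) * y (σ k) :=
        hstep k j (Nat.covBy_iff_add_one_eq.mp (Fin.covBy_iff.mp hkj))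
      rw [mul_comm (x (σ j))] at hkj' ⊢
      rw [mul_comm (x (σ k))] at ih
      exact cross_mul_le_trans_s2 (hy _) (hx _) (hy _) (hx _) (hy _)
        (fun h => le_antisymm (h ▸ hxσ hkj.le) (hx _))
        (fun h => le_antisymm (h ▸ hyσ hkj.le) (hy _)) ih hkj'
  have hσ : ∀ ⦃i j : Fin n⦄, i ≤ j → PairBayesLE x y (σ i) (σ j) := fun i j hij =>
    ⟨hxσ hij, hyσ hij, hratio (le_iff_reflTransGen_covBy.mp hij)⟩
  intro a b
  rcases le_total (σ.symm a) (σ.symm b) with hab | hba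
  · left; simpa using hσ hab
  · right; simpa using hσ hba

theorem isClosed_setOf_bayesLE :
    IsClosed {p : (Fin n → ℝ) × (Fin n → ℝ) | bayesLE p.1 p.2} := by
  simp only [bayesLE, Antitone, Set.ofPred_exists, Set.ofPred_and, Set.ofPred_forall]
  refine isClosed_iUnion_of_finite fun σ => .inter ?_ (.inter ?_ ?_) <;>
    exact isClosed_iInter fun i => isClosed_iInter fun j => isClosed_iInter fun _ =>
      isClosed_le (by fun_prop) (by fun_prop)

theorem pairwiseBayesLE_pureState {i : Fin n} (hx : ∀ j, 0 ≤ x j) (hi : ∀ j, x j ≤ x i) :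
    PairwiseBayesLE x (pureState i) := by
  have top (j : Fin n) : PairBayesLE x (pureState i) i j := by
    refine ⟨hi j, ?_, ?_⟩ <;> by_cases hj : j = i <;> simp [pureState, hj, hx j]
  intro a b
  rcases eq_or_ne a i with rfl | ha
  · exact Or.inl (top b)
  rcases eq_or_ne b i with rfl | hb
  · exact Or.inr (top a)
  rcases le_total (x b) (x a) with h | h
  · exact Or.inl ⟨h, by simp [pureState, ha, hb]⟩
  · exact Or.inr ⟨h, by simp [pureState, ha, hb]⟩

end BayesLE

namespace ClState

variable {n : ℕ}

theorem exists_pos (x : ClState n) : ∃ i, 0 < x.1 i := by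
  obtain ⟨i, -, hi⟩ := Finset.exists_ne_zero_of_sum_ne_zero (x.2.2 ▸ one_ne_zero)
  exact ⟨i, (x.2.1 i).lt_of_ne' hi⟩

theorem clLE_iff_pairwiseBayesLE {x y : ClState n} : clLE x y ↔ PairwiseBayesLE x.1 y.1 :=
  ⟨pairwiseBayesLE_of_bayesLE x.2.1 y.2.1, bayesLE_of_pairwiseBayesLE⟩

instance : PartialOrder (ClState n) where
  le := clLE
  le_refl x := clLE_iff_pairwiseBayesLE.mpr (.refl x.1)
  le_trans x y z hxy hyz := clLE_iff_pairwiseBayesLE.mpr <|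
    (clLE_iff_pairwiseBayesLE.mp hxy).trans x.2.1 y.2.1 y.exists_pos z.2.1
      (clLE_iff_pairwiseBayesLE.mp hyz)
  le_antisymm x y hxy hyx := Subtype.ext <|
    (clLE_iff_pairwiseBayesLE.mp hxy).antisymm x.2.2 y.2.2 (clLE_iff_pairwiseBayesLE.mp hyx)

instance : TopologicalSpace (ClState n) :=
  inferInstanceAs (TopologicalSpace {x // IsClassicalState n x})

instance : CompactSpace (ClState n) :=
  isCompact_iff_compactSpace.mp (isCompact_stdSimplex ℝ (Fin n))

instance : OrderClosedTopology (ClState n) :=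
  ⟨isClosed_setOf_bayesLE.preimage (continuous_subtype_val.prodMap continuous_subtype_val)⟩

def vertex (i : Fin n) : ClState n :=
  ⟨pureState i, fun j => by by_cases h : j = i <;> simp [pureState, h], by simp [pureState]⟩

theorem le_vertex {x : ClState n} {i : Fin n} (hi : ∀ j, x.1 j ≤ x.1 i) : x ≤ vertex i :=
  clLE_iff_pairwiseBayesLE.mpr (pairwiseBayesLE_pureState x.2.1 hi)

theorem eq_vertex_of_vertex_le {i : Fin n} {y : ClState n} (h : vertex i ≤ y) : y = vertex i := by
  have hzero (j : Fin n) (hj : j ≠ i) : y.1 j = 0 :=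
    (clLE_iff_pairwiseBayesLE.mp h).eq_zero_of_eq_zero ⟨i, by simp [vertex, pureState]⟩ y.2.1
      (by simp [vertex, pureState, hj])
  refine le_antisymm (le_vertex fun j => ?_) h
  by_cases hj : j = i
  · rw [hj]
  · rw [hzero j hj]
    exact y.2.1 i

theorem forall_le_imp_eq_iff_pureState (x : ClState n) :
    (∀ y, x ≤ y → y = x) ↔ ∃ i, x.1 = pureState i := by
  constructor
  · intro hmax
    have : Nonempty (Fin n) := ⟨x.exists_pos.choose⟩
    obtain ⟨i, hi⟩ := Finite.exists_max x.1
    exact ⟨i, congrArg Subtype.val (hmax _ (le_vertex hi)).symm⟩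
  · rintro ⟨i, hx⟩ y hxy
    obtain rfl : x = vertex i := Subtype.ext hx
    exact eq_vertex_of_vertex_le hxy

noncomputable def uniform [NeZero n] : ClState n :=
  ⟨fun _ => (n : ℝ)⁻¹, fun _ => by positivity, by simp⟩

theorem uniform_le [NeZero n] (x : ClState n) : uniform ≤ x :=
  clLE_iff_pairwiseBayesLE.mpr (pairwiseBayesLE_const (c := (n : ℝ)⁻¹) (by positivity) x.1)

end ClState

/-- (Δⁿ, ⊑) is a dcpo whose maximal elements are exactly the pure states and whose
least element is (1/n, …, 1/n). -/
theorem classical_states_dcpo (n : ℕ) (hn : 2 ≤ n) :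
    (∀ x : ClState n, clLE x x) ∧
    (∀ x y : ClState n, clLE x y → clLE y x → x = y) ∧
    (∀ x y z : ClState n, clLE x y → clLE y z → clLE x z) ∧
    (∀ S : Set (ClState n), S.Nonempty → DirectedOn clLE S →
      ∃ a : ClState n, IsLub' clLE S a) ∧
    ({x : ClState n | ∀ y, clLE x y → y = x} =
      {x : ClState n | ∃ i : Fin n, x.val = pureState i}) ∧
    (∃ b : ClState n, (∀ i, b.val i = (n : ℝ)⁻¹) ∧ ∀ x, clLE b x) := by
  have : NeZero n := ⟨by omega⟩
  exact ⟨le_refl, fun _ _ => le_antisymm (α := ClState n),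
    fun _ _ _ => le_trans (α := ClState n), fun _ hne hd => exists_isLUB_of_directedOn hne hd,
    Set.ext ClState.forall_le_imp_eq_iff_pureState,
    ClState.uniform, fun _ => rfl, ClState.uniform_le⟩
end

section
/- For every n ≥ 2 there exists an order embedding φ : (Δⁿ, ⊑) → (Ωⁿ, ⊑) (x ⊑ y iff φ(x) ⊑ φ(y)) such that σ(φ(x)) = μ(x) for all x ∈ Δⁿ, where μ is Shannon entropy and σ is von Neumann entropy. -/
open scoped ComplexOrder Matrix

/-- Ωⁿ : density matrices on ℂⁿ. -/
def IsDensityMatrix (n : ℕ) (ρ : Matrix (Fin n) (Fin n) ℂ) : Prop :=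
  ρ.PosSemidef ∧ ρ.trace = 1

def QState (n : ℕ) := {ρ : Matrix (Fin n) (Fin n) ℂ // IsDensityMatrix n ρ}

/-- The spectral order on density matrices. -/
def specLE {n : ℕ} (ρ σ : Matrix (Fin n) (Fin n) ℂ) : Prop :=
  ∃ U : Matrix (Fin n) (Fin n) ℂ, U ∈ Matrix.unitaryGroup (Fin n) ℂ ∧
    (Uᴴ * ρ * U).IsDiag ∧ (Uᴴ * σ * U).IsDiag ∧
    bayesLE (fun i => ((Uᴴ * ρ * U) i i).re) (fun i => ((Uᴴ * σ * U) i i).re)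

def qLE {n : ℕ} (ρ σ : QState n) : Prop := specLE ρ.val σ.val

/-- Shannon entropy (with the convention 0 · ln 0 = 0, as `Real.log 0 = 0`). -/
noncomputable def shannonEntropy {n : ℕ} (x : ClState n) : ℝ :=
  -∑ i, x.val i * Real.log (x.val i)

/-- von Neumann entropy: −∑ λᵢ ln λᵢ, λᵢ the eigenvalues of ρ. -/
noncomputable def vnEntropy {n : ℕ} (ρ : QState n) : ℝ :=
  -∑ i, ρ.prop.1.1.eigenvalues i * Real.log (ρ.prop.1.1.eigenvalues i)

/-!
Send a probability vector `x` to the diagonal density matrix `diag x`; its eigenvalues are the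
entries of `x`, so the entropies agree, and the identity unitary shows that `x ⊑ y` implies
`diag x ⊑ diag y`. Conversely, if a unitary `U` diagonalizes both `diag x` and `diag y`, pick a
permutation `σ` with `U (σ j) j ≠ 0` for all `j` (a nonzero term in the Leibniz expansion of
`det U`). Comparing entries of `diag x * U = U * (Uᴴ * diag x * U)` along these nonzero entries
shows that `Uᴴ * diag x * U` has diagonal `x ∘ σ`, and likewise for `y` with the same `σ`; the
Bayesian order is invariant under such a common relabelling.
-/

open Matrix

namespace Matrix

variable {ι R : Type*} [Fintype ι] [DecidableEq ι]

theorem exists_perm_forall_apply_ne_zero [CommRing R] {U : Matrix ι ι R} (hU : U.det ≠ 0) :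
    ∃ σ : Equiv.Perm ι, ∀ j, U (σ j) j ≠ 0 := by
  contrapose! hU
  rw [det_apply]
  refine Finset.sum_eq_zero fun σ _ => ?_
  obtain ⟨j, hj⟩ := hU σ
  rw [Finset.prod_eq_zero (Finset.mem_univ j) (f := fun i => U (σ i) i) hj, smul_zero]

theorem IsDiag.apply_eq_of_diagonal_mul_eq [CommRing R] [IsDomain R] {U M : Matrix ι ι R}
    {d : ι → R} (hM : M.IsDiag) (h : diagonal d * U = U * M) {i j : ι} (hij : U i j ≠ 0) :
    M j j = d i := by
  have hij' : U i j * d i = U i j * M j j := by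
    rw [← hM.diagonal_diag] at h
    simpa only [diagonal_mul, mul_diagonal, diag_apply, mul_comm] using congrFun (congrFun h i) j
  exact (mul_left_cancel₀ hij hij').symm

theorem IsDiag.diag_conjTranspose_mul_diagonal_mul [CommRing R] [StarRing R] [IsDomain R]
    {U : Matrix ι ι R} (hU : U ∈ unitaryGroup ι R) {d : ι → R}
    (hM : (Uᴴ * diagonal d * U).IsDiag) {σ : Equiv.Perm ι} (hσ : ∀ j, U (σ j) j ≠ 0) :
    (Uᴴ * diagonal d * U).diag = d ∘ σ := by
  have h : diagonal d * U = U * (Uᴴ * diagonal d * U) := by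
    rw [← mul_assoc, ← mul_assoc, ← star_eq_conjTranspose, mem_unitaryGroup_iff.mp hU, one_mul]
  exact funext fun j => hM.apply_eq_of_diagonal_mul_eq h (hσ j)

theorem IsHermitian.map_eigenvalues_of_diagonal {𝕜 : Type*} [RCLike 𝕜] (d : ι → ℝ)
    (hA : (diagonal fun i => (d i : 𝕜)).IsHermitian) :
    Finset.univ.val.map hA.eigenvalues = Finset.univ.val.map d := by
  apply Multiset.map_injective (RCLike.ofReal_injective (K := 𝕜))
  rw [Multiset.map_map, ← hA.roots_charpoly_eq_eigenvalues, charpoly_diagonal,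
    Polynomial.roots_prod _ _ (by simp [Finset.prod_ne_zero_iff, Polynomial.X_sub_C_ne_zero])]
  simp

end Matrix

theorem bayesLE_of_comp_perm {n : ℕ} {x y : Fin n → ℝ} (π : Equiv.Perm (Fin n))
    (h : bayesLE (x ∘ π) (y ∘ π)) : bayesLE x y := by
  obtain ⟨σ, hx, hy, hxy⟩ := h
  exact ⟨σ.trans π, hx, hy, hxy⟩

theorem specLE_diagonal_iff {n : ℕ} {x y : Fin n → ℝ} :
    specLE (diagonal fun i => (x i : ℂ)) (diagonal fun i => (y i : ℂ)) ↔ bayesLE x y := by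
  constructor
  · rintro ⟨U, hU, hx, hy, hxy⟩
    obtain ⟨σ, hσ⟩ := exists_perm_forall_apply_ne_zero
      (isUnit_det_of_right_inverse (mem_unitaryGroup_iff.mp hU)).ne_zero
    have hdiag {z : Fin n → ℝ} (hz : (Uᴴ * diagonal (fun i => (z i : ℂ)) * U).IsDiag) :
        (fun i => ((Uᴴ * diagonal (fun i => (z i : ℂ)) * U) i i).re) = z ∘ σ := by
      funext j
      simp [← diag_apply, hz.diag_conjTranspose_mul_diagonal_mul hU hσ]
    rw [hdiag hx, hdiag hy] at hxy
    exact bayesLE_of_comp_perm σ hxy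
  · intro hxy
    refine ⟨1, one_mem _, ?_, ?_, ?_⟩ <;> simp [hxy]

noncomputable def diagonalState {n : ℕ} (x : ClState n) : QState n :=
  ⟨diagonal fun i => (x.val i : ℂ),
    posSemidef_diagonal_iff.mpr fun i => Complex.zero_le_real.mpr (x.prop.1 i), by
    rw [trace_diagonal, ← Complex.ofReal_sum, x.prop.2, Complex.ofReal_one]⟩

theorem vnEntropy_diagonalState {n : ℕ} (x : ClState n) :
    vnEntropy (diagonalState x) = shannonEntropy x := by
  have h := congrArg (fun s => (s.map fun t => t * Real.log t).sum)
    ((diagonalState x).prop.1.1.map_eigenvalues_of_diagonal x.val)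
  simp only [Multiset.map_map, Function.comp_def, Finset.sum_map_val] at h
  exact congrArg Neg.neg h

theorem classical_embeds_in_quantum_general (n : ℕ) :
    ∃ φ : ClState n → QState n,
      (∀ x y : ClState n, clLE x y ↔ qLE (φ x) (φ y)) ∧
      (∀ x : ClState n, vnEntropy (φ x) = shannonEntropy x) :=
  ⟨diagonalState, fun _ _ => specLE_diagonal_iff.symm, vnEntropy_diagonalState⟩

/-- There is an order embedding of (Δⁿ, ⊑) into (Ωⁿ, ⊑) preserving entropy. -/
theorem classical_embeds_in_quantum (n : ℕ) (hn : 2 ≤ n) :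
    ∃ φ : ClState n → QState n,
      (∀ x y : ClState n, clLE x y ↔ qLE (φ x) (φ y)) ∧
      (∀ x : ClState n, vnEntropy (φ x) = shannonEntropy x) :=
  classical_embeds_in_quantum_general n
end

section
/- For every n ≥ 2 and x ∈ Δⁿ, the straight line path π(t) = (1−t)·⊥ + t·x from ⊥ := (1/n,…,1/n) to x is Scott continuous (monotone from [0,1] to (Δⁿ,⊑) and preserving suprema of directed subsets of [0,1]) and satisfies π(t) ≪ x for every t ∈ [0,1). -/
/-- `x ≪ y` : for every (nonempty) directed `S` with supremum `y`
there is `s ∈ S` with `x ⊑ s`. -/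
def WayBelow {α : Type*} (le : α → α → Prop) (x y : α) : Prop :=
  ∀ S : Set α, S.Nonempty → DirectedOn le S → IsLub' le S y → ∃ s ∈ S, le x s

/-- The straight line path π(t) = (1−t)·⊥ + t·x from ⊥ = (1/n,…,1/n) to x. -/
noncomputable def statePath {n : ℕ} (x : ClState n) (t : Set.Icc (0 : ℝ) 1) : ClState n :=
  ⟨fun i => (1 - t.val) * (n : ℝ)⁻¹ + t.val * x.val i, by
    have ht0 := t.prop.1
    have ht1 := t.prop.2
    rcases Nat.eq_zero_or_pos n with h | h
    · subst h
      exact absurd x.prop.2 (by simp)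
    have hn : (0 : ℝ) < (n : ℝ) := by exact_mod_cast h
    constructor
    · intro i
      have hx := x.prop.1 i
      have hinv : (0 : ℝ) ≤ (n : ℝ)⁻¹ := by positivity
      nlinarith
    · have hs : ∑ i, x.val i = 1 := x.prop.2
      rw [Finset.sum_add_distrib, ← Finset.mul_sum, ← Finset.mul_sum, hs,
        Finset.sum_const, Finset.card_univ, Fintype.card_fin, nsmul_eq_mul]
      field_simp
      ring⟩

/-!
Sorting `x` decreasingly by a permutation `σ` sorts every `π(t)` too, and along `σ` the
Bayesian inequality between `π(s)` and `π(t)` is `(t - s)(xᵢ - xⱼ)/n ≥ 0`. Suprema are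
preserved because `⊑` is a closed relation and the supremum of a directed subset of `[0, 1]`
lies in its closure.

For `π(t) ≪ x`, a permutation-free description of `⊑` shows that it is a partial order on
`Δⁿ`; as `Δⁿ` is compact and `⊑` closed, the supremum `x` of a directed set `S` is then a limit
point of `S`. For `t < 1` the inequalities `π(t)ᵢ yⱼ < π(t)ⱼ yᵢ` (for `xⱼ < xᵢ`) hold strictly
at `y = x`, hence near `x`, and so any `s ∈ S` close to `x` satisfies `π(t) ⊑ s`, with the same
permutation as `s ⊑ x`.
-/

open Filter Topology

/-- Permutation-free form of the Bayesian order `x ⊑ y`. -/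
def BayesPairwiseLE {ι : Type*} (x y : ι → ℝ) : Prop :=
  (∀ i j, y i < y j → x i ≤ x j) ∧ ∀ i j, y i ≤ y j → x j * y i ≤ x i * y j

lemma cross_le_trans {a₁ a₂ a₃ b₁ b₂ b₃ : ℝ} (hb₁ : 0 ≤ b₁) (hb₂ : 0 < b₂) (hb₃ : 0 ≤ b₃)
    (h₁₂ : a₁ * b₂ ≤ a₂ * b₁) (h₂₃ : a₂ * b₃ ≤ a₃ * b₂) : a₁ * b₃ ≤ a₃ * b₁ :=
  le_of_mul_le_mul_right (by linear_combination b₃ * h₁₂ + b₁ * h₂₃) hb₂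

lemma cross_le_of_adjacent {n : ℕ} {f g : Fin n → ℝ} (hf0 : ∀ i, 0 ≤ f i) (hg0 : ∀ i, 0 ≤ g i)
    (hg : Antitone g) (hadj : ∀ i j : Fin n, (i : ℕ) + 1 = j → f i * g j ≤ f j * g i)
    {p q : Fin n} (hpq : p ≤ q) : f p * g q ≤ f q * g p := by
  obtain ⟨k, hk⟩ := Nat.exists_eq_add_of_le (Fin.le_def.1 hpq)
  induction k generalizing q with
  | zero =>
    obtain rfl : q = p := Fin.ext hk
    exact le_rfl
  | succ k ih =>
    rcases (hg0 q).eq_or_lt with hq | hq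
    · rw [← hq, mul_zero]
      exact mul_nonneg (hf0 q) (hg0 p)
    · let q' : Fin n := ⟨p + k, by omega⟩
      have hq'q : q' ≤ q := Fin.le_def.2 (by simp only [q']; omega)
      exact cross_le_trans (hg0 p) (hq.trans_le (hg hq'q)) (hg0 q)
        (ih (Fin.le_def.2 (by simp [q'])) rfl) (hadj q' q (by simp only [q']; omega))

namespace BayesPairwiseLE

variable {ι : Type*} {x y z : ι → ℝ}

lemma refl (x : ι → ℝ) : BayesPairwiseLE x x :=
  ⟨fun _ _ h => h.le, fun _ _ _ => by rw [mul_comm]⟩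

lemma pos_of_pos (h : BayesPairwiseLE x y) (hx0 : ∀ i, 0 ≤ x i) (hx : x ≠ 0) {j : ι}
    (hyj : 0 < y j) : 0 < x j := by
  refine (hx0 j).lt_of_ne fun hxj => hx (funext fun i => le_antisymm ?_ (hx0 i))
  rcases lt_or_ge (y i) (y j) with hij | hji
  · exact (h.1 i j hij).trans_eq hxj.symm
  · have := h.2 j i hji
    rw [← hxj, zero_mul] at this
    exact nonpos_of_mul_nonpos_left this hyj

lemma trans (hxy : BayesPairwiseLE x y) (hyz : BayesPairwiseLE y z) (hx0 : ∀ i, 0 ≤ x i)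
    (hy0 : ∀ i, 0 ≤ y i) (hy : y ≠ 0) (hz0 : ∀ i, 0 ≤ z i) : BayesPairwiseLE x z := by
  refine ⟨fun i j hij => ?_, fun i j hij => ?_⟩
  · rcases (hyz.1 i j hij).lt_or_eq with hy' | hy'
    · exact hxy.1 i j hy'
    · have hyj := hyz.pos_of_pos hy0 hy ((hz0 i).trans_lt hij)
      have := hxy.2 j i hy'.ge
      rw [hy'] at this
      exact le_of_mul_le_mul_right this hyj
  · rcases (hz0 j).eq_or_lt with hzj | hzj
    · rw [le_antisymm (hzj ▸ hij) (hz0 i), ← hzj, mul_zero, mul_zero]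
    have hyj := hyz.pos_of_pos hy0 hy hzj
    rcases le_or_gt (y i) (y j) with hy' | hy'
    · have := cross_le_trans (a₁ := z i) (a₂ := y i) (a₃ := x i) (hz0 j) hyj (hx0 j)
        (by linarith [hyz.2 i j hij]) (by linarith [hxy.2 i j hy'])
      linarith
    · have hz : z i = z j := le_antisymm hij (not_lt.1 fun h => hy'.not_ge (hyz.1 i j h))
      rw [hz]
      exact mul_le_mul_of_nonneg_right (hxy.1 j i hy') (hz0 j)

lemma antisymm [Fintype ι] (hxy : BayesPairwiseLE x y) (hyx : BayesPairwiseLE y x)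
    (hx : ∑ i, x i = 1) (hy : ∑ i, y i = 1) : x = y := by
  have cross_eq : ∀ i j, y i ≤ y j → x j * y i = x i * y j := by
    intro i j hij
    rcases le_or_gt (x i) (x j) with hx' | hx'
    · linarith [hxy.2 i j hij, hyx.2 i j hx']
    · have hy' : y i = y j := le_antisymm hij (hyx.1 j i hx')
      linarith [hxy.2 j i hy'.ge, hxy.2 i j hij]
  funext i
  have : x i * ∑ j, y j = (∑ j, x j) * y i := by
    rw [Finset.mul_sum, Finset.sum_mul]
    refine Finset.sum_congr rfl fun j _ => ?_
    rcases le_total (y i) (y j) with h | h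
    · exact (cross_eq i j h).symm
    · exact cross_eq j i h
  simpa [hx, hy] using this

end BayesPairwiseLE

lemma bayesLE_iff_bayesPairwiseLE {n : ℕ} {x y : Fin n → ℝ} (hx0 : ∀ i, 0 ≤ x i)
    (hy0 : ∀ i, 0 ≤ y i) : bayesLE x y ↔ BayesPairwiseLE x y := by
  constructor
  · rintro ⟨σ, hxσ, hyσ, hadj⟩
    refine ⟨fun i j hij => ?_, fun i j hij => ?_⟩
    · have : σ.symm j ≤ σ.symm i := (lt_of_not_ge fun h => hij.not_ge (by simpa using hyσ h)).le
      simpa using hxσ this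
    · rcases le_total (σ.symm j) (σ.symm i) with h | h
      · simpa using cross_le_of_adjacent (fun k => hx0 (σ k)) (fun k => hy0 (σ k)) hyσ hadj h
      · have hy : y i = y j := le_antisymm hij (by simpa using hyσ h)
        rw [hy]
        exact mul_le_mul_of_nonneg_right (by simpa using hxσ h) (hy0 j)
  · intro h
    -- sort by `y` decreasingly, breaking ties by `x` decreasingly
    let σ := Tuple.sort fun i => (toLex (-y i, -x i) : ℝ ×ₗ ℝ)
    have key : ∀ {i j : Fin n}, i ≤ j →
        y (σ j) < y (σ i) ∨ y (σ j) = y (σ i) ∧ x (σ j) ≤ x (σ i) := fun hij => by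
      simpa [Prod.Lex.le_iff, eq_comm] using Tuple.monotone_sort (fun i => toLex (-y i, -x i)) hij
    have hyσ : Antitone fun i => y (σ i) := fun i j hij => by
      rcases key hij with hy | ⟨hy, -⟩
      exacts [hy.le, hy.le]
    refine ⟨σ, fun i j hij => ?_, hyσ, fun i j hij => h.2 _ _ (hyσ (Fin.le_def.2 (by omega)))⟩
    rcases key hij with hy | ⟨-, hx⟩
    exacts [h.1 _ _ hy, hx]

section ClState

variable {n : ℕ}

lemma ClState.val_ne_zero (x : ClState n) : x.val ≠ 0 := fun h => by
  simpa [h] using x.prop.2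

lemma ClState.card_pos (x : ClState n) : 0 < n :=
  Nat.pos_of_ne_zero fun h => by subst h; simpa using x.prop.2

lemma clLE_iff_bayesPairwiseLE {x y : ClState n} : clLE x y ↔ BayesPairwiseLE x.val y.val :=
  bayesLE_iff_bayesPairwiseLE x.prop.1 y.prop.1

lemma clLE_refl (x : ClState n) : clLE x x :=
  clLE_iff_bayesPairwiseLE.2 (.refl _)

lemma clLE_trans {x y z : ClState n} (hxy : clLE x y) (hyz : clLE y z) : clLE x z :=
  clLE_iff_bayesPairwiseLE.2 <| (clLE_iff_bayesPairwiseLE.1 hxy).trans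
    (clLE_iff_bayesPairwiseLE.1 hyz) x.prop.1 y.prop.1 y.val_ne_zero z.prop.1

lemma clLE_antisymm {x y : ClState n} (hxy : clLE x y) (hyx : clLE y x) : x = y :=
  Subtype.ext <| (clLE_iff_bayesPairwiseLE.1 hxy).antisymm (clLE_iff_bayesPairwiseLE.1 hyx)
    x.prop.2 y.prop.2

lemma isClosed_setOf_bayesLE_s13 {α : Type*} [TopologicalSpace α] {f g : α → Fin n → ℝ}
    (hf : Continuous f) (hg : Continuous g) : IsClosed {a | bayesLE (f a) (g a)} := by
  simp only [bayesLE, Antitone, Set.ofPred_exists, Set.ofPred_and, Set.ofPred_forall]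
  refine isClosed_iUnion_of_finite fun σ => .inter ?_ (.inter ?_ ?_) <;>
    exact isClosed_iInter fun i => isClosed_iInter fun j => isClosed_iInter fun _ =>
      isClosed_le (by fun_prop) (by fun_prop)

lemma exists_isLub'_mem_closure {S : Set (ClState n)} (hne : S.Nonempty)
    (hdir : DirectedOn clLE S) :
    ∃ z : ClState n, IsLub' clLE S z ∧ z.val ∈ closure (Subtype.val '' S) := by
  have : Nonempty S := hne.to_subtype
  let tail : S → Set (Fin n → ℝ) := fun s => closure (Subtype.val '' {r ∈ S | clLE s r})
  have tail_subset : ∀ s, tail s ⊆ stdSimplex ℝ (Fin n) := fun s =>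
    closure_minimal (by rintro _ ⟨r, -, rfl⟩; exact r.prop)
      (isCompact_stdSimplex ℝ (Fin n)).isClosed
  have tail_directed : Directed (· ⊇ ·) tail := fun s₁ s₂ => by
    obtain ⟨s₃, hs₃, h₁₃, h₂₃⟩ := hdir _ s₁.prop _ s₂.prop
    exact ⟨⟨s₃, hs₃⟩, closure_mono (Set.image_mono fun r hr => ⟨hr.1, clLE_trans h₁₃ hr.2⟩),
      closure_mono (Set.image_mono fun r hr => ⟨hr.1, clLE_trans h₂₃ hr.2⟩)⟩
  obtain ⟨z, hz⟩ := IsCompact.nonempty_iInter_of_directed_nonempty_isCompact_isClosed tail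
    tail_directed (fun s => ⟨s.val.val, subset_closure ⟨s.val, ⟨s.prop, clLE_refl _⟩, rfl⟩⟩)
    (fun s => (isCompact_stdSimplex ℝ (Fin n)).of_isClosed_subset isClosed_closure (tail_subset s))
    (fun _ => isClosed_closure)
  rw [Set.mem_iInter] at hz
  have mem_of_tail : ∀ s : S, ∀ P : Set (Fin n → ℝ), IsClosed P →
      (∀ r ∈ S, clLE s r → r.val ∈ P) → z ∈ P := fun s P hP h =>
    closure_minimal (by rintro _ ⟨r, ⟨hr, hsr⟩, rfl⟩; exact h r hr hsr) hP (hz s)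
  obtain ⟨s₀, hs₀⟩ := hne
  refine ⟨⟨z, tail_subset ⟨s₀, hs₀⟩ (hz _)⟩, ⟨fun s hs => ?_, fun b hb => ?_⟩, ?_⟩
  · exact mem_of_tail ⟨s, hs⟩ _ (isClosed_setOf_bayesLE_s13 continuous_const continuous_id)
      fun _ _ hsr => hsr
  · exact mem_of_tail ⟨s₀, hs₀⟩ _ (isClosed_setOf_bayesLE_s13 continuous_id continuous_const)
      fun r hr _ => hb r hr
  · exact mem_of_tail ⟨s₀, hs₀⟩ _ isClosed_closure fun r hr _ => subset_closure ⟨r, hr, rfl⟩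

lemma IsLub'.val_mem_closure {S : Set (ClState n)} {x : ClState n} (hx : IsLub' clLE S x)
    (hne : S.Nonempty) (hdir : DirectedOn clLE S) : x.val ∈ closure (Subtype.val '' S) := by
  obtain ⟨z, hz, hz_mem⟩ := exists_isLub'_mem_closure hne hdir
  rwa [clLE_antisymm (hx.2 z hz.1) (hz.2 x hx.1)]

end ClState

section statePath

variable {n : ℕ} (x : ClState n)

lemma statePath_apply (t : Set.Icc (0 : ℝ) 1) (i : Fin n) :
    (statePath x t).val i = (1 - t.val) * (n : ℝ)⁻¹ + t.val * x.val i :=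
  rfl

lemma continuous_statePath_val : Continuous fun t => (statePath x t).val := by
  simp only [statePath]
  fun_prop

lemma statePath_antitone_comp {σ : Equiv.Perm (Fin n)} (hσ : Antitone fun i => x.val (σ i))
    (t : Set.Icc (0 : ℝ) 1) : Antitone fun i => (statePath x t).val (σ i) := fun i j hij => by
  have := mul_le_mul_of_nonneg_left (hσ hij) t.prop.1
  simp only [statePath_apply]
  linarith

lemma statePath_mono {s t : Set.Icc (0 : ℝ) 1} (hst : s ≤ t) :
    clLE (statePath x s) (statePath x t) := by
  obtain ⟨σ, hσ⟩ : ∃ σ : Equiv.Perm (Fin n), Antitone fun i => x.val (σ i) :=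
    ⟨Tuple.sort fun i => -x.val i, fun i j hij => by
      simpa using Tuple.monotone_sort (fun i => -x.val i) hij⟩
  refine ⟨σ, statePath_antitone_comp x hσ s, statePath_antitone_comp x hσ t, fun i j hij => ?_⟩
  have hx : x.val (σ j) ≤ x.val (σ i) := hσ (Fin.le_def.2 (by omega))
  have hst : s.val ≤ t.val := hst
  simp only [statePath_apply]
  linear_combination mul_nonneg (mul_nonneg (inv_nonneg.2 n.cast_nonneg) (sub_nonneg.2 hx))
    (sub_nonneg.2 hst)

lemma statePath_isLub' {S : Set (Set.Icc (0 : ℝ) 1)} (hne : S.Nonempty)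
    {u : Set.Icc (0 : ℝ) 1} (hu : IsLUB S u) :
    IsLub' clLE (statePath x '' S) (statePath x u) := by
  refine ⟨Set.forall_mem_image.2 fun s hs => statePath_mono x (hu.1 hs), fun b hb => ?_⟩
  have hclosed : IsClosed {t | clLE (statePath x t) b} :=
    isClosed_setOf_bayesLE_s13 (continuous_statePath_val x) continuous_const
  exact closure_minimal (fun s hs => hb _ (Set.mem_image_of_mem _ hs)) hclosed (hu.mem_closure hne)

lemma eventually_statePath_mul_lt {t : Set.Icc (0 : ℝ) 1} (ht : t.val < 1) :
    ∀ᶠ v in 𝓝 x.val, ∀ i j, x.val j < x.val i →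
      (statePath x t).val i * v j < (statePath x t).val j * v i := by
  have hk : 0 < (1 - t.val) * (n : ℝ)⁻¹ := by
    have := x.card_pos
    have := sub_pos.2 ht
    positivity
  simp only [eventually_all]
  intro i j hij
  refine (isOpen_lt (by fun_prop) (by fun_prop)).mem_nhds ?_
  simp only [Set.mem_ofPred_eq, statePath_apply]
  nlinarith [mul_lt_mul_of_pos_left hij hk]

lemma statePath_wayBelow {t : Set.Icc (0 : ℝ) 1} (ht : t.val < 1) :
    WayBelow clLE (statePath x t) x := by
  intro S hne hdir hlub
  obtain ⟨_, ⟨s, hs, rfl⟩, hlt⟩ := ((mem_closure_iff_frequently.1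
    (hlub.val_mem_closure hne hdir)).and_eventually (eventually_statePath_mul_lt x ht)).exists
  obtain ⟨σ, hsσ, hxσ, -⟩ := hlub.1 s hs
  refine ⟨s, hs, σ, statePath_antitone_comp x hxσ t, hsσ, fun i j hij => ?_⟩
  have hij : i ≤ j := Fin.le_def.2 (by omega)
  rcases (hxσ hij).eq_or_lt with heq | hlt'
  · have : (statePath x t).val (σ j) = (statePath x t).val (σ i) := by
      simp only [statePath_apply, heq]
    rw [this]
    exact mul_le_mul_of_nonneg_left (hsσ hij) ((statePath x t).prop.1 _)
  · exact (hlt _ _ hlt').le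

end statePath

theorem straight_line_path_approximates_general (n : ℕ) (x : ClState n) :
    (∀ s t : Set.Icc (0 : ℝ) 1, s ≤ t → clLE (statePath x s) (statePath x t)) ∧
    (∀ S : Set (Set.Icc (0 : ℝ) 1), S.Nonempty → DirectedOn (· ≤ ·) S →
      ∀ u : Set.Icc (0 : ℝ) 1, IsLUB S u →
        IsLub' clLE (statePath x '' S) (statePath x u)) ∧
    (∀ t : Set.Icc (0 : ℝ) 1, t.val < 1 → WayBelow clLE (statePath x t) x) :=
  ⟨fun _ _ => statePath_mono x, fun _ hne _ _ => statePath_isLub' x hne,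
    fun _ => statePath_wayBelow x⟩

/-- The straight line path from ⊥ to x is Scott continuous and approximates x:
it is monotone, preserves suprema of directed subsets of [0,1], and
π(t) ≪ x for all t < 1. -/
theorem straight_line_path_approximates (n : ℕ) (hn : 2 ≤ n) (x : ClState n) :
    (∀ s t : Set.Icc (0 : ℝ) 1, s ≤ t → clLE (statePath x s) (statePath x t)) ∧
    (∀ S : Set (Set.Icc (0 : ℝ) 1), S.Nonempty → DirectedOn (· ≤ ·) S →
      ∀ u : Set.Icc (0 : ℝ) 1, IsLUB S u →
        IsLub' clLE (statePath x '' S) (statePath x u)) ∧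
    (∀ t : Set.Icc (0 : ℝ) 1, t.val < 1 → WayBelow clLE (statePath x t) x) :=
  straight_line_path_approximates_general n x
end

section
/- Let D be a dcpo and μ : D → [0,∞)* a Scott continuous map that measures the content of every x ∈ ker μ. Then every x ∈ ker μ is a maximal element of D. -/
/-- `U` is Scott open: an upper set inaccessible by directed suprema. -/
def ScottOpen {α : Type*} (le : α → α → Prop) (U : Set α) : Prop :=
  (∀ x ∈ U, ∀ y, le x y → y ∈ U) ∧
  ∀ S : Set α, S.Nonempty → DirectedOn le S →
    ∀ a, IsLub' le S a → a ∈ U → (S ∩ U).Nonempty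

/-- `μ` (valued in [0,∞)*) measures the content of `y`. -/
def MeasuresContentAt {α : Type*} (le : α → α → Prop) (μ : α → ℝ) (y : α) : Prop :=
  ∀ U : Set α, ScottOpen le U → y ∈ U →
    ∃ ε > (0 : ℝ), {z | le z y ∧ μ z < μ y + ε} ⊆ U

/-! The complement of the principal ideal `↓x` is Scott open. If `x ⊑ y` with `μ x = 0`, then
`μ y = 0` too, so `μ` measures the content of `y`; were `y ⋢ x`, the complement of `↓x` would be a
Scott neighbourhood of `y`, hence contain every `z ⊑ y` with `μ z` close to `μ y`, in particular
`x` itself, which is absurd. -/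

section MeasuresContent

variable {α : Type*} {le : α → α → Prop}

theorem scottOpen_setOf_not_le (htrans : ∀ x y z, le x y → le y z → le x z) (x : α) :
    ScottOpen le {z | ¬ le z x} := by
  refine ⟨fun a ha b hab hbx => ha (htrans a b x hab hbx), ?_⟩
  intro S _ _ a ha hax
  by_contra hS
  exact hax (ha.2 x fun s hs => by_contra fun hsx => hS ⟨s, hs, hsx⟩)

theorem MeasuresContentAt.mem_of_le_of_measure_le {μ : α → ℝ} {x y : α} {U : Set α}
    (hy : MeasuresContentAt le μ y) (hU : ScottOpen le U) (hyU : y ∈ U)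
    (hxy : le x y) (hμ : μ x ≤ μ y) : x ∈ U := by
  obtain ⟨ε, hε, hsub⟩ := hy U hU hyU
  exact hsub ⟨hxy, by linarith⟩

theorem MeasuresContentAt.le_of_le_of_measure_le (hrefl : ∀ x, le x x)
    (htrans : ∀ x y z, le x y → le y z → le x z) {μ : α → ℝ} {x y : α}
    (hy : MeasuresContentAt le μ y) (hxy : le x y) (hμ : μ x ≤ μ y) : le y x := by
  by_contra hyx
  exact hy.mem_of_le_of_measure_le (scottOpen_setOf_not_le htrans x) hyx hxy hμ (hrefl x)

end MeasuresContent

theorem kernel_of_measurement_is_maximal_general {D : Type*} (le : D → D → Prop)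
    (hrefl : ∀ x, le x x)
    (hantisymm : ∀ x y, le x y → le y x → x = y)
    (htrans : ∀ x y z, le x y → le y z → le x z)
    (μ : D → ℝ) (hpos : ∀ x, 0 ≤ μ x)
    (hmono : ∀ x y, le x y → μ y ≤ μ x)
    (hmeas : ∀ x, μ x = 0 → MeasuresContentAt le μ x) :
    ∀ x, μ x = 0 → ∀ y, le x y → y = x := by
  intro x hx y hxy
  have hy : μ y = 0 := le_antisymm (hx ▸ hmono x y hxy) (hpos y)
  exact hantisymm y x
    ((hmeas y hy).le_of_le_of_measure_le hrefl htrans hxy (hx.trans hy.symm).le) hxy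

/-- If a Scott continuous μ : D → [0,∞)* measures the content of every element of
its kernel, then every element of its kernel is maximal. -/
theorem kernel_of_measurement_is_maximal {D : Type*} (le : D → D → Prop)
    (hrefl : ∀ x, le x x)
    (hantisymm : ∀ x y, le x y → le y x → x = y)
    (htrans : ∀ x y z, le x y → le y z → le x z)
    (hdcpo : ∀ S : Set D, S.Nonempty → DirectedOn le S → ∃ a, IsLub' le S a)
    (μ : D → ℝ) (hpos : ∀ x, 0 ≤ μ x)
    (hmono : ∀ x y, le x y → μ y ≤ μ x)
    (hcont : ∀ S : Set D, S.Nonempty → DirectedOn le S →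
      ∀ a, IsLub' le S a → μ a = sInf (μ '' S))
    (hmeas : ∀ x, μ x = 0 → MeasuresContentAt le μ x) :
    ∀ x, μ x = 0 → ∀ y, le x y → y = x :=
  kernel_of_measurement_is_maximal_general le hrefl hantisymm htrans μ hpos hmono hmeas
end

section
/- Let D be a dcpo and μ : D → [0,∞)* a Scott continuous map. If μ measures the content of y ∈ D, then μ is strictly monotone at y: for every x ∈ D with x ⊑ y and μx = μy, one has x = y. -/
/-!
If `x ⊑ y` and `μ x = μ y`, then `x` lies in every small content set `{z ⊑ y | μ z < μ y + ε}`,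
so measuring the content of `y` puts `x` in every Scott open neighbourhood of `y`. Applied to
the Scott open set `{z | z ⋢ x}` this forces `y ⊑ x`, and antisymmetry gives `x = y`.
-/

section ScottOpen

variable {α : Type*} {le : α → α → Prop}

theorem le_of_forall_scottOpen_mem (hrefl : ∀ x, le x x)
    (htrans : ∀ x y z, le x y → le y z → le x z) {x y : α}
    (h : ∀ U, ScottOpen le U → y ∈ U → x ∈ U) : le y x := by
  by_contra hyx
  exact h _ (scottOpen_setOf_not_le htrans x) hyx (hrefl x)

theorem MeasuresContentAt.mem_of_le_of_eq {μ : α → ℝ} {x y : α}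
    (hmeas : MeasuresContentAt le μ y) (hxy : le x y) (hμ : μ x = μ y)
    {U : Set α} (hU : ScottOpen le U) (hyU : y ∈ U) : x ∈ U := by
  obtain ⟨ε, hε, hsub⟩ := hmeas U hU hyU
  exact hsub ⟨hxy, by linarith⟩

end ScottOpen

theorem measurement_strictly_monotone_general {D : Type*} (le : D → D → Prop)
    (hrefl : ∀ x, le x x)
    (hantisymm : ∀ x y, le x y → le y x → x = y)
    (htrans : ∀ x y z, le x y → le y z → le x z)
    (μ : D → ℝ)
    (y : D) (hmeas : MeasuresContentAt le μ y) :
    ∀ x, le x y → μ x = μ y → x = y := fun x hxy hμ =>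
  hantisymm x y hxy <| le_of_forall_scottOpen_mem hrefl htrans fun _ hU hyU =>
    hmeas.mem_of_le_of_eq hxy hμ hU hyU

/-- If a Scott continuous μ : D → [0,∞)* measures the content of y, then μ is
strictly monotone at y. -/
theorem measurement_strictly_monotone {D : Type*} (le : D → D → Prop)
    (hrefl : ∀ x, le x x)
    (hantisymm : ∀ x y, le x y → le y x → x = y)
    (htrans : ∀ x y z, le x y → le y z → le x z)
    (hdcpo : ∀ S : Set D, S.Nonempty → DirectedOn le S → ∃ a, IsLub' le S a)
    (μ : D → ℝ) (hpos : ∀ x, 0 ≤ μ x)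
    (hmono : ∀ x y, le x y → μ y ≤ μ x)
    (hcont : ∀ S : Set D, S.Nonempty → DirectedOn le S →
      ∀ a, IsLub' le S a → μ a = sInf (μ '' S))
    (y : D) (hmeas : MeasuresContentAt le μ y) :
    ∀ x, le x y → μ x = μ y → x = y :=
  measurement_strictly_monotone_general le hrefl hantisymm htrans μ y hmeas
end
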